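/- arXiv:1206.2800 — 2 statements merged into one kernel-verified Lean document; each statement's English description precedes it below -/
import Mathlib

section
/- For all real θ, the equation cos θ · Q₅(cos θ, sin θ) = sin θ · P₅(cos θ, sin θ), where Q₅(w,k) = k(w²+k²)(2(p-1)wk + (2-p)w²) - w³(w² + (p-1)k²) and P₅(w,k) = k w²(w² + (p-1)k²), holds if and only if θ is congruent modulo 2π to one of: π/2, 3π/2, π/4, 5π/4, arccos(-(p-1)/√(p²-2p+2)), or -arccos((p-1)/√(p²-2p+2)). -/
open Real

/-- The degree-5 homogeneous polynomial `Q₅`. -/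
def Q5 (p w k : ℝ) : ℝ :=
  k * (w ^ 2 + k ^ 2) * (2 * (p - 1) * w * k + (2 - p) * w ^ 2) -
    w ^ 3 * (w ^ 2 + (p - 1) * k ^ 2)

/-- The degree-5 homogeneous polynomial `P₅`. -/
def P5 (p w k : ℝ) : ℝ := k * w ^ 2 * (w ^ 2 + (p - 1) * k ^ 2)

lemma aux_pi (θ a b : ℝ) (m : ℤ) (hb : b = a + π + 2 * π * m) :
    (∃ n : ℤ, θ = a + n * π) ↔ ∃ n : ℤ, θ = a + 2 * π * n ∨ θ = b + 2 * π * n := by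
  constructor
  · rintro ⟨n, rfl⟩
    rcases Int.even_or_odd n with ⟨k, hk⟩ | ⟨k, hk⟩
    · exact ⟨k, Or.inl (by subst hk; push_cast; ring)⟩
    · exact ⟨k - m, Or.inr (by subst hk hb; push_cast; ring)⟩
  · rintro ⟨n, h | h⟩
    · exact ⟨2 * n, by rw [h]; push_cast; ring⟩
    · exact ⟨2 * (m + n) + 1, by rw [h, hb]; push_cast; ring⟩

lemma sin_zero_shift (θ a : ℝ) :
    Real.sin (θ - a) = 0 ↔ ∃ n : ℤ, θ = a + n * π := by
  rw [Real.sin_eq_zero_iff]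
  constructor
  · rintro ⟨n, h⟩; exact ⟨n, by linarith⟩
  · rintro ⟨n, h⟩; exact ⟨n, by linarith⟩

set_option maxHeartbeats 1000000 in
/-- For `1 < p < 2`, the equation `cos θ · Q₅(cos θ, sin θ) = sin θ · P₅(cos θ, sin θ)`
holds iff `θ` is congruent modulo `2π` to one of the six listed polar angles. -/
theorem stmt2 (p : ℝ) (hp1 : 1 < p) (hp2 : p < 2) (θ : ℝ) :
    Real.cos θ * Q5 p (Real.cos θ) (Real.sin θ) =
      Real.sin θ * P5 p (Real.cos θ) (Real.sin θ) ↔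
    ∃ n : ℤ, θ = π / 2 + 2 * π * n ∨ θ = 3 * π / 2 + 2 * π * n ∨
      θ = π / 4 + 2 * π * n ∨ θ = 5 * π / 4 + 2 * π * n ∨
      θ = Real.arccos (-(p - 1) / Real.sqrt (p ^ 2 - 2 * p + 2)) + 2 * π * n ∨
      θ = -Real.arccos ((p - 1) / Real.sqrt (p ^ 2 - 2 * p + 2)) + 2 * π * n := by
  have hpc : Real.sin θ ^ 2 + Real.cos θ ^ 2 = 1 := Real.sin_sq_add_cos_sq θ
  set s0 : ℝ := Real.sqrt (p ^ 2 - 2 * p + 2) with hs0def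
  have hqpos : (0:ℝ) < p ^ 2 - 2 * p + 2 := by nlinarith
  have hs0pos : 0 < s0 := Real.sqrt_pos.mpr hqpos
  have hs0sq : s0 ^ 2 = p ^ 2 - 2 * p + 2 := Real.sq_sqrt hqpos.le
  have hlt : p - 1 < s0 := by nlinarith
  have hd1 : (p - 1) / s0 ≤ 1 := (div_le_one hs0pos).mpr hlt.le
  have hd0 : 0 < (p - 1) / s0 := div_pos (by linarith) hs0pos
  have hnd : -(p - 1) / s0 = -((p - 1) / s0) := neg_div _ _
  set A : ℝ := Real.arccos (-(p - 1) / s0) with hAdef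
  have hcosA : Real.cos A = -(p - 1) / s0 := by
    apply Real.cos_arccos
    · rw [hnd]; linarith
    · rw [hnd]; linarith
  have hsinA : Real.sin A = 1 / s0 := by
    rw [hAdef, Real.sin_arccos]
    have h1 : 1 - (-(p - 1) / s0) ^ 2 = (1 / s0) ^ 2 := by
      field_simp
      nlinarith [hs0sq]
    rw [h1, Real.sqrt_sq (by positivity)]
  -- the algebraic factorization
  have e1 : Real.cos θ * Q5 p (Real.cos θ) (Real.sin θ) -
      Real.sin θ * P5 p (Real.cos θ) (Real.sin θ) =
      -((Real.cos θ) ^ 2 * (Real.sin θ ^ 2 + Real.cos θ ^ 2) *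
        (Real.cos θ - Real.sin θ) * (Real.cos θ + (p - 1) * Real.sin θ)) := by
    unfold Q5 P5; ring
  rw [hpc] at e1
  have key : (Real.cos θ * Q5 p (Real.cos θ) (Real.sin θ) =
      Real.sin θ * P5 p (Real.cos θ) (Real.sin θ)) ↔
      (Real.cos θ = 0 ∨ Real.cos θ - Real.sin θ = 0 ∨
        Real.cos θ + (p - 1) * Real.sin θ = 0) := by
    rw [← sub_eq_zero, e1]
    rw [neg_eq_zero, mul_one, mul_assoc, mul_eq_zero, mul_eq_zero,
      pow_eq_zero_iff (two_ne_zero)]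
  rw [key]
  -- each factor as a sine vanishing condition
  have f1 : Real.cos θ = 0 ↔ ∃ n : ℤ, θ = π / 2 + n * π := by
    rw [← sin_zero_shift]
    rw [Real.sin_sub, Real.cos_pi_div_two, Real.sin_pi_div_two]
    constructor <;> intro h <;> [linarith [h]; linarith [h]]
  have f2 : Real.cos θ - Real.sin θ = 0 ↔ ∃ n : ℤ, θ = π / 4 + n * π := by
    rw [← sin_zero_shift]
    rw [Real.sin_sub, Real.cos_pi_div_four, Real.sin_pi_div_four,
      show Real.sin θ * (Real.sqrt 2 / 2) - Real.cos θ * (Real.sqrt 2 / 2)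
        = -(Real.cos θ - Real.sin θ) * (Real.sqrt 2 / 2) from by ring,
      mul_eq_zero, neg_eq_zero]
    have h2 : Real.sqrt 2 / 2 ≠ 0 := by positivity
    tauto
  have f3 : Real.cos θ + (p - 1) * Real.sin θ = 0 ↔ ∃ n : ℤ, θ = A + n * π := by
    rw [← sin_zero_shift]
    rw [Real.sin_sub, hcosA, hsinA]
    constructor <;> intro h
    · have : Real.sin θ * (-(p - 1) / s0) - Real.cos θ * (1 / s0) =
        -(Real.cos θ + (p - 1) * Real.sin θ) / s0 := by ring
      rw [this, h]; simp
    · have h' : (Real.cos θ + (p - 1) * Real.sin θ) / s0 = 0 := by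
        rw [← neg_eq_zero, ← h]; ring
      exact (div_eq_zero_iff.mp h').resolve_right (ne_of_gt hs0pos)
  rw [f1, f2, f3]
  -- split each π-family into two 2π-families
  have g1 := aux_pi θ (π / 2) (3 * π / 2) 0 (by push_cast; ring)
  have g2 := aux_pi θ (π / 4) (5 * π / 4) 0 (by push_cast; ring)
  have hAval : -Real.arccos ((p - 1) / s0) = A + π + 2 * π * (-1 : ℤ) := by
    rw [hAdef, hnd, Real.arccos_neg]
    push_cast; ring
  have g3 := aux_pi θ A (-Real.arccos ((p - 1) / s0)) (-1) hAval
  rw [g1, g2, g3]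
  constructor
  · rintro (⟨n, h | h⟩ | ⟨n, h | h⟩ | ⟨n, h | h⟩)
    · exact ⟨n, Or.inl h⟩
    · exact ⟨n, Or.inr (Or.inl h)⟩
    · exact ⟨n, Or.inr (Or.inr (Or.inl h))⟩
    · exact ⟨n, Or.inr (Or.inr (Or.inr (Or.inl h)))⟩
    · exact ⟨n, Or.inr (Or.inr (Or.inr (Or.inr (Or.inl h))))⟩
    · exact ⟨n, Or.inr (Or.inr (Or.inr (Or.inr (Or.inr h))))⟩
  · rintro ⟨n, h | h | h | h | h | h⟩
    · exact Or.inl ⟨n, Or.inl h⟩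
    · exact Or.inl ⟨n, Or.inr h⟩
    · exact Or.inr (Or.inl ⟨n, Or.inl h⟩)
    · exact Or.inr (Or.inl ⟨n, Or.inr h⟩)
    · exact Or.inr (Or.inr ⟨n, Or.inl h⟩)
    · exact Or.inr (Or.inr ⟨n, Or.inr h⟩)
end

section
/- Let p > 1 and let h(r) = 2·arctan(r) for r > 0. Then h solves the equation (p-1)h'²h'' + (p-3)(h'² sin h cos h / r² − h' sin²h / r³) + h'³/r + h'' sin²h / r² − sin³h cos h / r⁴ = 0 on (0,∞) if and only if p = 2. -/
/-!
With `h = 2 arctan`, `sin h`, `cos h`, `h'` and `h''` are rational functions of `r`, and the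
left-hand side of the ODE collapses to `32 r (2 - p) / (1 + r²)⁴`, which vanishes for `r > 0`
exactly when `p = 2`.
-/

open Real

/-- `h` solves the rotationally symmetric `p`-harmonic Euler–Lagrange ODE on `S`. -/
def SolvesODE (p : ℝ) (h : ℝ → ℝ) (S : Set ℝ) : Prop :=
  ∀ r ∈ S,
    (p - 1) * (deriv h r) ^ 2 * deriv (deriv h) r +
      (p - 3) * ((deriv h r) ^ 2 * Real.sin (h r) * Real.cos (h r) / r ^ 2 -
        deriv h r * (Real.sin (h r)) ^ 2 / r ^ 3) +
      (deriv h r) ^ 3 / r + deriv (deriv h) r * (Real.sin (h r)) ^ 2 / r ^ 2 -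
      (Real.sin (h r)) ^ 3 * Real.cos (h r) / r ^ 4 = 0

theorem sin_two_mul_arctan (x : ℝ) : sin (2 * arctan x) = 2 * x / (1 + x ^ 2) := by
  rw [sin_two_mul, sin_arctan, cos_arctan, mul_assoc, div_mul_div_comm, mul_one, ← sq,
    sq_sqrt (by positivity), mul_div_assoc]

theorem cos_two_mul_arctan (x : ℝ) : cos (2 * arctan x) = (1 - x ^ 2) / (1 + x ^ 2) := by
  rw [cos_two_mul, cos_sq_arctan]
  field_simp
  ring

theorem deriv_two_mul_arctan : deriv (fun x : ℝ => 2 * arctan x) = fun x => 2 / (1 + x ^ 2) := by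
  funext x
  exact ((hasDerivAt_arctan x).const_mul 2).deriv.trans (mul_one_div 2 _)

theorem deriv_deriv_two_mul_arctan (x : ℝ) :
    deriv (deriv fun x : ℝ => 2 * arctan x) x = -4 * x / (1 + x ^ 2) ^ 2 := by
  have hx : 1 + x ^ 2 ≠ 0 := by positivity
  have hd := (hasDerivAt_const x (2 : ℝ)).fun_div ((hasDerivAt_pow 2 x).const_add 1) hx
  rw [deriv_two_mul_arctan, hd.deriv]
  push_cast
  ring

theorem solvesODE_two_mul_arctan_iff (p : ℝ) {S : Set ℝ} (hS : 0 ∉ S) :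
    SolvesODE p (fun x => 2 * arctan x) S ↔ ∀ r ∈ S, p = 2 := by
  refine forall₂_congr fun r hr => ?_
  have hr0 : r ≠ 0 := ne_of_mem_of_not_mem hr hS
  have hr1 : 1 + r ^ 2 ≠ 0 := by positivity
  -- `h''` before `h'`: rewriting `h'` first would break the pattern of `h''`.
  simp only [deriv_deriv_two_mul_arctan]
  simp only [deriv_two_mul_arctan, sin_two_mul_arctan, cos_two_mul_arctan]
  refine (Eq.congr_left (y := 32 * r * (2 - p) / (1 + r ^ 2) ^ 4) ?_).trans ?_
  · field_simp
    ring
  · simp [hr0, hr1, sub_eq_zero, eq_comm (a := p)]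

theorem stmt10_general (p : ℝ) :
    SolvesODE p (fun r => 2 * Real.arctan r) (Set.Ioi 0) ↔ p = 2 := by
  rw [solvesODE_two_mul_arctan_iff p Set.self_notMem_Ioi]
  exact ⟨fun h => h 1 (Set.mem_Ioi.2 one_pos), fun h _ _ => h⟩

/-- `h(r) = 2 arctan r` solves the Euler–Lagrange ODE on `(0,∞)` iff `p = 2`. -/
theorem stmt10 (p : ℝ) (hp : 1 < p) :
    SolvesODE p (fun r => 2 * Real.arctan r) (Set.Ioi 0) ↔ p = 2 :=
  stmt10_general p
end
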